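/- Let γ̃ ∈ M₂(ℝ) be symmetric positive definite with det γ̃ = 1, and let M₁, M₂ ∈ M₂(ℝ) be linearly independent symmetric matrices with ⟨γ̃, M₁⟩ = ⟨γ̃, M₂⟩ = 0. Let B = B(M₁, M₂) be the matrix with entries B¹¹ = 2(M₁²² M₂¹² − M₁¹² M₂²²), B¹² = B²¹ = M₁¹¹ M₂²² − M₁²² M₂¹¹, B²² = 2(M₁¹² M₂¹¹ − M₁¹¹ M₂¹²). Then det B > 0, B¹¹ ≠ 0, and γ̃ = sign(B¹¹) (det B)^{−1/2} B. -/

import Mathlib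

/-!
In the coordinates `(m¹¹, m¹², m²²)` of `S₂(ℝ)`, `B(M₁, M₂)` is the cross product of the coordinate
vectors of `M₁` and `M₂` with its entries scaled by `-2, -1, -2`, so linear independence makes
`B ≠ 0`. Orthogonality of `γ̃` to `M₁, M₂` gives `γ̃¹¹ B = B¹¹ γ̃`; since `γ̃¹¹ > 0` this forces
`B¹¹ ≠ 0`, and `det γ̃ = 1` then yields `det B = (B¹¹ / γ̃¹¹)²`, from which the normalisation
`γ̃ = (γ̃¹¹ / B¹¹) B = sign(B¹¹) (det B)^{-1/2} B` follows.
-/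

open Matrix

/-- The Frobenius inner product `⟨A,B⟩ = tr(AᵀB)`. -/
noncomputable def frob (A B : Matrix (Fin 2) (Fin 2) ℝ) : ℝ := (Aᵀ * B).trace

/-- The generalized cross product of two symmetric 2×2 matrices (formula (3.3) of the paper). -/
def crossS2 (M₁ M₂ : Matrix (Fin 2) (Fin 2) ℝ) : Matrix (Fin 2) (Fin 2) ℝ :=
  !![2 * (M₁ 1 1 * M₂ 0 1 - M₁ 0 1 * M₂ 1 1), M₁ 0 0 * M₂ 1 1 - M₁ 1 1 * M₂ 0 0;
     M₁ 0 0 * M₂ 1 1 - M₁ 1 1 * M₂ 0 0, 2 * (M₁ 0 1 * M₂ 0 0 - M₁ 0 0 * M₂ 0 1)]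

lemma frob_eq_of_isSymm {A M : Matrix (Fin 2) (Fin 2) ℝ} (hA : A.IsSymm) (hM : M.IsSymm) :
    frob A M = A 0 0 * M 0 0 + 2 * A 0 1 * M 0 1 + A 1 1 * M 1 1 := by
  simp only [frob, trace_fin_two, mul_apply, Fin.sum_univ_two, transpose_apply,
    hA.apply 0 1, hM.apply 0 1]
  ring

def symVec (M : Matrix (Fin 2) (Fin 2) ℝ) : Fin 3 → ℝ := ![M 0 0, M 0 1, M 1 1]

lemma linearIndependent_symVec {M₁ M₂ : Matrix (Fin 2) (Fin 2) ℝ} (h₁ : M₁.IsSymm)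
    (h₂ : M₂.IsSymm) (hindep : LinearIndependent ℝ ![M₁, M₂]) :
    LinearIndependent ℝ ![symVec M₁, symVec M₂] := by
  rw [LinearIndependent.pair_iff] at hindep ⊢
  intro s t hst
  apply hindep
  have h := congrFun hst
  ext i j
  fin_cases i <;> fin_cases j
  · simpa [symVec] using h 0
  · simpa [symVec] using h 1
  · simpa [symVec, ← h₁.apply 0 1, ← h₂.apply 0 1] using h 1
  · simpa [symVec] using h 2

lemma crossS2_eq_crossProduct (M₁ M₂ : Matrix (Fin 2) (Fin 2) ℝ) :
    crossS2 M₁ M₂ = !![-2 * (symVec M₁ ⨯₃ symVec M₂) 0, -(symVec M₁ ⨯₃ symVec M₂) 1;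
      -(symVec M₁ ⨯₃ symVec M₂) 1, -2 * (symVec M₁ ⨯₃ symVec M₂) 2] := by
  simp only [crossS2, symVec, cross_apply]
  ext i j
  fin_cases i <;> fin_cases j <;>
    simp only [Fin.zero_eta, Fin.mk_one, of_apply, cons_val', cons_val_zero, cons_val_one,
      cons_val_fin_one, cons_val] <;> ring

lemma crossS2_ne_zero {M₁ M₂ : Matrix (Fin 2) (Fin 2) ℝ} (h₁ : M₁.IsSymm) (h₂ : M₂.IsSymm)
    (hindep : LinearIndependent ℝ ![M₁, M₂]) : crossS2 M₁ M₂ ≠ 0 := by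
  have hcross := crossProduct_ne_zero_iff_linearIndependent.2
    (linearIndependent_symVec h₁ h₂ hindep)
  contrapose! hcross
  rw [crossS2_eq_crossProduct] at hcross
  have h := congrFun₂ hcross
  ext i
  fin_cases i
  · simpa using h 0 0
  · simpa using h 0 1
  · simpa using h 1 1

lemma smul_crossS2_eq_smul {γ M₁ M₂ : Matrix (Fin 2) (Fin 2) ℝ} (hγ : γ.IsSymm)
    (h₁ : M₁.IsSymm) (h₂ : M₂.IsSymm) (horth₁ : frob γ M₁ = 0) (horth₂ : frob γ M₂ = 0) :
    γ 0 0 • crossS2 M₁ M₂ = crossS2 M₁ M₂ 0 0 • γ := by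
  rw [frob_eq_of_isSymm hγ h₁] at horth₁
  rw [frob_eq_of_isSymm hγ h₂] at horth₂
  ext i j
  fin_cases i <;> fin_cases j <;>
    simp only [crossS2, Fin.zero_eta, Fin.mk_one, Matrix.smul_apply, of_apply, cons_val',
      cons_val_zero, cons_val_one, cons_val_fin_one, smul_eq_mul]
  · ring
  · linear_combination M₂ 1 1 * horth₁ - M₁ 1 1 * horth₂
  · rw [hγ.apply 0 1]; linear_combination M₂ 1 1 * horth₁ - M₁ 1 1 * horth₂
  · linear_combination 2 * (M₁ 0 1 * horth₂ - M₂ 0 1 * horth₁)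

lemma Real.sign_mul_inv_sqrt_div_sq {x a : ℝ} (hx : x ≠ 0) (ha : 0 < a) :
    Real.sign x * (√((x / a) ^ 2))⁻¹ = a / x := by
  rw [Real.sqrt_sq_eq_abs, abs_div, abs_of_pos ha, inv_div]
  rcases hx.lt_or_gt with h | h
  · rw [Real.sign_of_neg h, abs_of_neg h, div_neg]; ring
  · rw [Real.sign_of_pos h, abs_of_pos h, one_mul]

/-- Explicit pointwise reconstruction formula (3.4): a symmetric positive definite matrix `γ̃`
of determinant one, orthogonal to two linearly independent symmetric matrices `M₁, M₂`, equals
`sign(B¹¹)(det B)^{-1/2} B` where `B = B(M₁,M₂)` is the generalized cross product. -/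
theorem stmt9 (γt M₁ M₂ : Matrix (Fin 2) (Fin 2) ℝ)
    (hγpd : γt.PosDef) (hγdet : γt.det = 1)
    (h₁ : M₁.IsSymm) (h₂ : M₂.IsSymm)
    (hindep : LinearIndependent ℝ ![M₁, M₂])
    (horth₁ : frob γt M₁ = 0) (horth₂ : frob γt M₂ = 0) :
    0 < (crossS2 M₁ M₂).det ∧ crossS2 M₁ M₂ 0 0 ≠ 0 ∧
      γt = (Real.sign (crossS2 M₁ M₂ 0 0) * (Real.sqrt (crossS2 M₁ M₂).det)⁻¹) • crossS2 M₁ M₂ := by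
  set B := crossS2 M₁ M₂
  have ha : 0 < γt 0 0 := hγpd.diag_pos
  have hprop : γt 0 0 • B = B 0 0 • γt :=
    smul_crossS2_eq_smul (isHermitian_iff_isSymm.1 hγpd.isHermitian) h₁ h₂ horth₁ horth₂
  have hB₀₀ : B 0 0 ≠ 0 := by
    intro h
    rw [h, zero_smul, smul_eq_zero] at hprop
    exact crossS2_ne_zero h₁ h₂ hindep (hprop.resolve_left ha.ne')
  have hB : B = (B 0 0 / γt 0 0) • γt := by
    rw [div_eq_inv_mul, mul_smul, ← hprop, smul_smul, inv_mul_cancel₀ ha.ne', one_smul]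
  have hdet : B.det = (B 0 0 / γt 0 0) ^ 2 := by
    conv_lhs => rw [hB, det_smul, hγdet, Fintype.card_fin, mul_one]
  refine ⟨by rw [hdet]; positivity, hB₀₀, ?_⟩
  rw [hdet, Real.sign_mul_inv_sqrt_div_sq hB₀₀ ha]
  calc γt = (γt 0 0 / B 0 0 * (B 0 0 / γt 0 0)) • γt := by
        rw [div_mul_div_cancel₀ hB₀₀, div_self ha.ne', one_smul]
    _ = (γt 0 0 / B 0 0) • B := by rw [mul_smul, ← hB]
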